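/- arXiv:1207.4722 — 9 statements merged into one kernel-verified Lean document; each statement's English description precedes it below -/
import Mathlib

section
/- The set of values of the function (1+y)(1+z)(y+z)/(yz) on the torus {|y| = |z| = 1} is exactly the real interval [−1, 8]; that is, {k ∈ ℂ : ∃ θ, φ ∈ ℝ, (1 + e^{iθ})(1 + e^{iφ})(e^{iθ} + e^{iφ}) = k·e^{i(θ+φ)}} = {k ∈ ℂ : k is real and −1 ≤ k ≤ 8}. -/
/-!
For `|y| = |z| = 1` we have `ȳ = y⁻¹`, and expanding `|1 + y + z|² = (1 + y + z)(1 + y⁻¹ + z⁻¹)`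
gives `(1 + y)(1 + z)(y + z) / (yz) = |1 + y + z|² - 1`. Hence every value is real and lies in
`[-1, 8]` because `0 ≤ |1 + y + z| ≤ 3`. Conversely `z = ȳ` makes `1 + y + z = 1 + 2 cos θ`, which
takes every value in `[0, 3]`.
-/

open Complex

theorem one_add_mul_one_add_mul_add_eq {y z : ℂ} (hy : ‖y‖ = 1) (hz : ‖z‖ = 1) :
    (1 + y) * (1 + z) * (y + z) = ((‖1 + y + z‖ ^ 2 - 1 : ℝ) : ℂ) * (y * z) := by
  have hy0 : y ≠ 0 := norm_ne_zero_iff.mp (by simp [hy])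
  have hz0 : z ≠ 0 := norm_ne_zero_iff.mp (by simp [hz])
  push_cast
  rw [← mul_conj', map_add, map_add, map_one, ← inv_eq_conj hy, ← inv_eq_conj hz]
  field_simp
  ring

theorem norm_one_add_add_le_three {y z : ℂ} (hy : ‖y‖ = 1) (hz : ‖z‖ = 1) :
    ‖1 + y + z‖ ≤ 3 :=
  calc ‖1 + y + z‖ ≤ ‖(1 : ℂ)‖ + ‖y‖ + ‖z‖ := norm_add₃_le
    _ = 3 := by rw [norm_one, hy, hz]; norm_num

theorem exists_one_add_two_mul_cos_eq {r : ℝ} (h0 : 0 ≤ r) (h3 : r ≤ 3) :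
    ∃ θ : ℝ, 1 + 2 * Real.cos θ = r :=
  ⟨Real.arccos ((r - 1) / 2), by rw [Real.cos_arccos (by linarith) (by linarith)]; ring⟩

theorem one_add_exp_I_mul_add_exp_I_mul_neg (θ : ℝ) :
    1 + exp (I * θ) + exp (I * (-θ : ℝ)) = (1 + 2 * Real.cos θ : ℝ) := by
  push_cast
  rw [add_assoc, two_cos]
  ring_nf

/-- The set `𝒦_g` of values of `(1+y)(1+z)(y+z)/(yz)` on the torus `|y| = |z| = 1`
is exactly the real interval `[-1, 8]`. -/
theorem Kg_eq_Icc :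
    {k : ℂ | ∃ θ φ : ℝ,
        (1 + Complex.exp (Complex.I * θ)) * (1 + Complex.exp (Complex.I * φ)) *
          (Complex.exp (Complex.I * θ) + Complex.exp (Complex.I * φ)) =
        k * Complex.exp (Complex.I * (θ + φ))} =
    {k : ℂ | ∃ x : ℝ, k = (x : ℂ) ∧ -1 ≤ x ∧ x ≤ 8} := by
  ext k
  simp only [Set.mem_ofPred_eq, mul_add I, exp_add]
  constructor
  · rintro ⟨θ, φ, h⟩
    have hy := norm_exp_I_mul_ofReal θ
    have hz := norm_exp_I_mul_ofReal φ
    rw [one_add_mul_one_add_mul_add_eq hy hz] at h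
    have hbound := norm_one_add_add_le_three hy hz
    refine ⟨_, (mul_right_cancel₀ (mul_ne_zero (exp_ne_zero _) (exp_ne_zero _)) h).symm, ?_, ?_⟩ <;>
      nlinarith [norm_nonneg (1 + exp (I * θ) + exp (I * φ))]
  · rintro ⟨x, rfl, h1, h8⟩
    have hr3 : √(1 + x) ≤ 3 := Real.sqrt_le_iff.mpr ⟨by norm_num, by linarith⟩
    obtain ⟨θ, hθ⟩ := exists_one_add_two_mul_cos_eq (Real.sqrt_nonneg (1 + x)) hr3
    refine ⟨θ, -θ, ?_⟩
    rw [one_add_mul_one_add_mul_add_eq (norm_exp_I_mul_ofReal θ) (norm_exp_I_mul_ofReal (-θ)),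
      one_add_exp_I_mul_add_exp_I_mul_neg, hθ, norm_real, Real.norm_of_nonneg (Real.sqrt_nonneg _),
      Real.sq_sqrt (by linarith), add_sub_cancel_left]
end

section
/- The intersection of the set of values of (y³ + z³ + 1)/(yz) on the torus {|y| = |z| = 1} with the real line is the interval [−1, 3]; that is, {k ∈ ℝ : ∃ θ, φ ∈ ℝ, e^{3iθ} + e^{3iφ} + 1 = k·e^{i(θ+φ)}} = [−1, 3]. -/
/-!
For `y, z` on the unit circle the numbers `a = y²/z`, `b = z²/y`, `c = 1/(yz)` are unimodular, have
product `1` and sum `k = (y³ + z³ + 1)/(yz)`. If `k` is real, conjugating (`w̄ = 1/w` on the circle)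
shows that `ab + bc + ca = k` as well, so `(a - 1)(b - 1)(c - 1) = 0`. One of the three is then `1`
and the other two are mutually conjugate, whence `k = 1 + 2 Re w ∈ [-1, 3]`. Conversely
`e^{3it} + e^{-3it} + 1 = 1 + 2 cos 3t` takes every value in `[-1, 3]`.
-/

open Complex ComplexConjugate

namespace Complex

lemma one_add_add_mem_Icc_of_mul_eq_one {y z : ℂ} (hy : ‖y‖ = 1) (hyz : y * z = 1) {k : ℝ}
    (hk : 1 + y + z = k) : k ∈ Set.Icc (-1 : ℝ) 3 := by
  have hz : z = conj y := by rw [← inv_eq_conj hy, eq_inv_of_mul_eq_one_right hyz]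
  have hre : k = 1 + 2 * y.re := by
    have := congrArg re hk
    simp only [add_re, one_re, ofReal_re, hz, conj_re] at this
    linarith
  have := abs_re_le_norm y
  rw [hy] at this
  constructor <;> linarith [abs_le.mp this]

lemma add_add_mem_Icc_of_mul_eq_one {x y z : ℂ} (hx : ‖x‖ = 1) (hy : ‖y‖ = 1) (hz : ‖z‖ = 1)
    (hxyz : x * y * z = 1) {k : ℝ} (hk : x + y + z = k) : k ∈ Set.Icc (-1 : ℝ) 3 := by
  have hpairs : x * y + y * z + z * x = k := by
    have hconj : x⁻¹ + y⁻¹ + z⁻¹ = k := by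
      rw [inv_eq_conj hx, inv_eq_conj hy, inv_eq_conj hz, ← map_add, ← map_add, hk, conj_ofReal]
    have hx0 : x ≠ 0 := norm_ne_zero_iff.mp (by simp [hx])
    have hy0 : y ≠ 0 := norm_ne_zero_iff.mp (by simp [hy])
    have hz0 : z ≠ 0 := norm_ne_zero_iff.mp (by simp [hz])
    field_simp at hconj
    linear_combination hconj + k * hxyz
  have hfactor : (x - 1) * (y - 1) * (z - 1) = 0 := by
    linear_combination hxyz - hpairs + hk
  simp only [mul_eq_zero, sub_eq_zero] at hfactor
  rcases hfactor with (rfl | rfl) | rfl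
  · exact one_add_add_mem_Icc_of_mul_eq_one hy (by simpa using hxyz) hk
  · exact one_add_add_mem_Icc_of_mul_eq_one hx (by simpa using hxyz) (by rw [← hk]; ring)
  · exact one_add_add_mem_Icc_of_mul_eq_one hx (by simpa using hxyz) (by rw [← hk]; ring)

lemma mem_Icc_of_cube_add_cube_add_one_eq {y z : ℂ} (hy : ‖y‖ = 1) (hz : ‖z‖ = 1) {k : ℝ}
    (h : y ^ 3 + z ^ 3 + 1 = k * (y * z)) : k ∈ Set.Icc (-1 : ℝ) 3 := by
  have hy0 : y ≠ 0 := norm_ne_zero_iff.mp (by simp [hy])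
  have hz0 : z ≠ 0 := norm_ne_zero_iff.mp (by simp [hz])
  refine add_add_mem_Icc_of_mul_eq_one (x := y ^ 2 / z) (y := z ^ 2 / y) (z := 1 / (y * z))
    (by simp [hy, hz]) (by simp [hy, hz]) (by simp [hy, hz]) (by field_simp) ?_
  field_simp
  linear_combination h

lemma exp_mul_I_add_exp_neg_mul_I_add_one (t : ℝ) :
    exp (t * I) + exp (-t * I) + 1 = ((1 + 2 * Real.cos t : ℝ) : ℂ) := by
  push_cast
  rw [← two_cos]
  ring

end Complex

/-- The intersection of the set `𝒦_n` of values of `(y³+z³+1)/(yz)` on the torus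
`|y| = |z| = 1` with the real line is the interval `[-1, 3]`. -/
theorem Kn_inter_real_eq_Icc :
    {k : ℝ | ∃ θ φ : ℝ,
        Complex.exp (3 * Complex.I * θ) + Complex.exp (3 * Complex.I * φ) + 1 =
          (k : ℂ) * Complex.exp (Complex.I * (θ + φ))} =
    Set.Icc (-1 : ℝ) 3 := by
  ext k
  constructor
  · rintro ⟨θ, φ, h⟩
    have hexp (t : ℝ) (n : ℕ) : exp (n * I * t) = exp (t * I) ^ n := by
      rw [← exp_nat_mul]; ring_nf
    refine mem_Icc_of_cube_add_cube_add_one_eq (norm_exp_ofReal_mul_I θ)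
      (norm_exp_ofReal_mul_I φ) ?_
    rw [← hexp θ 3, ← hexp φ 3, ← exp_add]
    push_cast at h ⊢
    rw [h]; ring_nf
  · rintro ⟨hk₁, hk₃⟩
    set t := Real.arccos ((k - 1) / 2)
    have hcos : Real.cos t = (k - 1) / 2 := Real.cos_arccos (by linarith) (by linarith)
    refine ⟨t / 3, -(t / 3), ?_⟩
    calc exp (3 * I * ↑(t / 3)) + exp (3 * I * ↑(-(t / 3))) + 1
        = exp (t * I) + exp (-t * I) + 1 := by push_cast; ring_nf
      _ = ((1 + 2 * Real.cos t : ℝ) : ℂ) := exp_mul_I_add_exp_neg_mul_I_add_one t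
      _ = k * exp (I * (↑(t / 3) + ↑(-(t / 3)))) := by
        rw [hcos]; push_cast; rw [add_neg_cancel, mul_zero, exp_zero]; ring
end

section
/- For k ∈ ℂ: (a) the projective plane cubic y³ + z³ + w³ = k·yzw is singular (i.e. there is a nonzero point (y,z,w) ∈ ℂ³ on the cubic at which all three partial derivatives of y³ + z³ + w³ − kyzw vanish) if and only if k = 3 or k² + 3k + 9 = 0 (equivalently k³ = 27); (b) the projective plane cubic (w+y)(w+z)(y+z) = k·yzw is singular (all partial derivatives of (w+y)(w+z)(y+z) − kyzw vanish at some nonzero point of the cubic) if and only if k ∈ {−1, 0, 8}. -/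
/-!
Only the vanishing of the gradient matters: by Euler's relation it forces the point onto the cubic.

For the Hesse cubic a coordinate of a singular point cannot vanish (the partials would then kill the
other two), and eliminating between the three partials gives `(k³ - 27) (yzw)² = 0`; conversely
`(1, 1, 3/k)` is singular when `k³ = 27`.

The second cubic is symmetric in `y, z, w`, and the difference of two partials factors as
`(y - z) (k w - y - z)`. Either two coordinates agree, and then the point is `(u, u, u)` (forcing
`k = 8`) or `(u, u, (k - 1) u)` (forcing `k = 0`), or `k w = y + z` and `k z = y + w`, whose
difference gives `k = -1` unless `z = w`.
-/

section HesseCubic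

variable {K : Type*} [Field K] {k y z w : K}

def HesseCritical (k y z w : K) : Prop :=
  3 * y ^ 2 - k * z * w = 0 ∧ 3 * z ^ 2 - k * y * w = 0 ∧ 3 * w ^ 2 - k * y * z = 0

theorem HesseCritical.mul_mul_ne_zero (h3 : (3 : K) ≠ 0) (hne : (y, z, w) ≠ (0, 0, 0))
    (h : HesseCritical k y z w) : y * z * w ≠ 0 := by
  obtain ⟨hy, hz, hw⟩ := h
  have sq_eq_zero {a : K} (ha : 3 * a ^ 2 = 0) : a = 0 := by simpa [h3] using ha
  have hy0 : y ≠ 0 := by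
    rintro rfl
    exact hne (by simp [sq_eq_zero (by simpa using hz), sq_eq_zero (by simpa using hw)])
  refine mul_ne_zero (mul_ne_zero hy0 ?_) ?_ <;> rintro rfl <;>
    exact hy0 (sq_eq_zero (by simpa using hy))

theorem HesseCritical.cube_eq (h3 : (3 : K) ≠ 0) (hne : (y, z, w) ≠ (0, 0, 0))
    (h : HesseCritical k y z w) : k ^ 3 = 27 := by
  have key : (k ^ 3 - 27) * (y * z * w) ^ 2 = 0 := by
    linear_combination (-(9 * z ^ 2 * w ^ 2)) * h.1 - (3 * k * z * w ^ 3) * h.2.1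
      - (k ^ 2 * y * z * w ^ 2) * h.2.2
  exact sub_eq_zero.mp (by simpa [h.mul_mul_ne_zero h3 hne] using key)

theorem exists_hesse_singular_of_cube_eq (h3 : (3 : K) ≠ 0) (hk : k ^ 3 = 27) :
    ∃ y z w : K, (y, z, w) ≠ (0, 0, 0) ∧ y ^ 3 + z ^ 3 + w ^ 3 - k * y * z * w = 0 ∧
      HesseCritical k y z w := by
  have hk0 : k ≠ 0 := by
    rintro rfl
    exact pow_ne_zero 3 h3 (by linear_combination -hk)
  refine ⟨1, 1, 3 / k, by simp, ?_, by field_simp; ring, by field_simp; ring, ?_⟩ <;>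
    field_simp <;> linear_combination -hk

end HesseCubic

theorem pow_three_eq_27_iff {R : Type*} [CommRing R] [IsDomain R] {k : R} :
    k ^ 3 = 27 ↔ k = 3 ∨ k ^ 2 + 3 * k + 9 = 0 := by
  have hfac : k ^ 3 - 27 = (k - 3) * (k ^ 2 + 3 * k + 9) := by ring
  rw [← sub_eq_zero, hfac, mul_eq_zero, sub_eq_zero]

section TriangleCubic

variable {K : Type*} [Field K] {k y z w : K}

-- The cubics `(w + y) (w + z) (y + z) = k y z w` form the pencil spanned by two triangles of lines.
def TriangleCritical (k y z w : K) : Prop :=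
  (w + z) * (y + z) + (w + y) * (w + z) - k * z * w = 0 ∧
    (w + y) * (y + z) + (w + y) * (w + z) - k * y * w = 0 ∧
    (w + z) * (y + z) + (w + y) * (y + z) - k * y * z = 0

theorem TriangleCritical.swap_left (h : TriangleCritical k y z w) : TriangleCritical k z y w := by
  obtain ⟨hy, hz, hw⟩ := h
  exact ⟨by linear_combination hz, by linear_combination hy, by linear_combination hw⟩

theorem TriangleCritical.swap_right (h : TriangleCritical k y z w) :
    TriangleCritical k y w z := by
  obtain ⟨hy, hz, hw⟩ := h
  exact ⟨by linear_combination hy, by linear_combination hw, by linear_combination hz⟩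

theorem TriangleCritical.eq_zero_or_eq_eight_of_eq (h3 : (3 : K) ≠ 0)
    (hne : (y, z, w) ≠ (0, 0, 0)) (h : TriangleCritical k y z w) (hyz : y = z) :
    k = 0 ∨ k = 8 := by
  subst hyz
  obtain ⟨hy, -, hw⟩ := h
  have hdiff : (y - w) * (k * y - (y + w)) = 0 := by linear_combination hy - hw
  rcases mul_eq_zero.mp hdiff with hyw | hw'
  · obtain rfl : y = w := sub_eq_zero.mp hyw
    have hy0 : y ≠ 0 := by rintro rfl; exact hne rfl
    have h8 : (k - 8) * y ^ 2 = 0 := by linear_combination -hy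
    exact .inr (sub_eq_zero.mp (by simpa [hy0] using h8))
  · obtain rfl : w = (k - 1) * y := by linear_combination -hw'
    have hy0 : y ≠ 0 := by rintro rfl; exact hne (by simp)
    have h0 : 3 * k * y ^ 2 = 0 := by linear_combination hw
    exact .inl (by simpa [h3, hy0] using h0)

theorem TriangleCritical.eq_neg_one_or_eq_zero_or_eq_eight (h3 : (3 : K) ≠ 0)
    (hne : (y, z, w) ≠ (0, 0, 0)) (h : TriangleCritical k y z w) :
    k = -1 ∨ k = 0 ∨ k = 8 := by
  have hyz : (y - z) * (k * w - (y + z)) = 0 := by linear_combination h.1 - h.2.1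
  have hyw : (y - w) * (k * z - (y + w)) = 0 := by linear_combination h.1 - h.2.2
  rcases mul_eq_zero.mp hyz with hyz | hkw
  · exact .inr (h.eq_zero_or_eq_eight_of_eq h3 hne (sub_eq_zero.mp hyz))
  rcases mul_eq_zero.mp hyw with hyw | hkz
  · exact .inr (h.swap_right.eq_zero_or_eq_eight_of_eq h3 (by simpa [and_comm] using hne)
      (sub_eq_zero.mp hyw))
  have hzw : (k + 1) * (z - w) = 0 := by linear_combination hkz - hkw
  rcases mul_eq_zero.mp hzw with hk | hzw
  · exact .inl (eq_neg_of_add_eq_zero_left hk)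
  · exact .inr (h.swap_left.swap_right.eq_zero_or_eq_eight_of_eq h3
      (by simpa [and_comm, and_left_comm] using hne) (sub_eq_zero.mp hzw))

-- For `k = -1` the cubic is `(y + z + w) (y z + z w + w y) = 0`, a line and a conic meeting at
-- `(ω, 1, ω²)` for a primitive cube root of unity `ω`.
theorem exists_triangle_singular {ω : K} (hω : ω ^ 2 + ω + 1 = 0)
    (hk : k = -1 ∨ k = 0 ∨ k = 8) :
    ∃ y z w : K, (y, z, w) ≠ (0, 0, 0) ∧ (w + y) * (w + z) * (y + z) - k * y * z * w = 0 ∧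
      TriangleCritical k y z w := by
  rcases hk with rfl | rfl | rfl
  · refine ⟨ω, 1, ω ^ 2, by simp, ?_, ?_, ?_, ?_⟩
    · linear_combination (ω + ω ^ 2 + ω ^ 3) * hω
    · linear_combination (1 + ω + ω ^ 2) * hω
    · linear_combination (2 * ω + ω ^ 2) * hω
    · linear_combination (1 + 2 * ω) * hω
  · exact ⟨-1, -1, 1, by simp, by ring, by ring, by ring, by ring⟩
  · exact ⟨1, 1, 1, by simp, by ring, by ring, by ring, by ring⟩

end TriangleCubic

/-- Singularity classification for the two families of plane cubics.
(a) The projective cubic `y³ + z³ + w³ = k·yzw` is singular iff `k = 3` or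
`k² + 3k + 9 = 0`; (b) the projective cubic `(w+y)(w+z)(y+z) = k·yzw` is
singular iff `k ∈ {-1, 0, 8}`. Singularity means that there is a nonzero point
of the cubic at which all three partial derivatives vanish. -/
theorem singular_cubics (k : ℂ) :
    ((∃ y z w : ℂ, (y, z, w) ≠ (0, 0, 0) ∧
        y ^ 3 + z ^ 3 + w ^ 3 - k * y * z * w = 0 ∧
        3 * y ^ 2 - k * z * w = 0 ∧
        3 * z ^ 2 - k * y * w = 0 ∧
        3 * w ^ 2 - k * y * z = 0) ↔
      (k = 3 ∨ k ^ 2 + 3 * k + 9 = 0)) ∧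
    ((∃ y z w : ℂ, (y, z, w) ≠ (0, 0, 0) ∧
        (w + y) * (w + z) * (y + z) - k * y * z * w = 0 ∧
        (w + z) * (y + z) + (w + y) * (w + z) - k * z * w = 0 ∧
        (w + y) * (y + z) + (w + y) * (w + z) - k * y * w = 0 ∧
        (w + z) * (y + z) + (w + y) * (y + z) - k * y * z = 0) ↔
      (k = -1 ∨ k = 0 ∨ k = 8)) := by
  have h3 : (3 : ℂ) ≠ 0 := three_ne_zero
  obtain ⟨ω, hω⟩ : ∃ ω : ℂ, ω ^ 2 + ω + 1 = 0 := by
    have hζ := (Complex.isPrimitiveRoot_exp 3 three_ne_zero).geom_sum_eq_zero (by norm_num)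
    simp only [Finset.sum_range_succ, Finset.sum_range_zero] at hζ
    exact ⟨_, by linear_combination hζ⟩
  refine ⟨⟨?_, fun hk => ?_⟩, ⟨?_, exists_triangle_singular hω⟩⟩
  · rintro ⟨y, z, w, hne, -, h⟩
    exact pow_three_eq_27_iff.mp (HesseCritical.cube_eq h3 hne h)
  · exact exists_hesse_singular_of_cube_eq h3 (pow_three_eq_27_iff.mpr hk)
  · rintro ⟨y, z, w, hne, -, h⟩
    exact TriangleCritical.eq_neg_one_or_eq_zero_or_eq_eight h3 hne h
end

section
/- Let k ∈ ℝ with k < −1 or k > 8. If y, z ∈ ℂ are nonzero, |y| = |z|, and (1+y)(1+z)(y+z) = k·yz, then z = conj(y) (the complex conjugate of y). -/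
/-!
Write `N = |y|² = |z|²`, so that `conj y = N / y` and `conj z = N / z`. Conjugating the curve
equation and clearing denominators gives `N (y + N)(z + N)(y + z) = k N² y z`; subtracting `N²`
times the original equation leaves `N (y + z)(1 - N)(y z - N) = 0`. The factor `y + z` forces
`k y z = 0`, and `y z = N = y conj y` is the claim. On the unit circle `N = 1` the curve equation
reads `k = |1 + y + z|² - 1`, which lies in `[-1, 8]` because `|1 + y + z| ≤ 3`.
-/

open Complex ComplexConjugate

theorem curve_factorization_of_norm_eq (k : ℝ) {y z : ℂ} (habs : ‖y‖ = ‖z‖)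
    (hcurve : (1 + y) * (1 + z) * (y + z) = (k : ℂ) * y * z) :
    (y + z) * (1 - (‖y‖ : ℂ) ^ 2) * (y * z - (‖y‖ : ℂ) ^ 2) = 0 := by
  set N : ℂ := (‖y‖ : ℂ) ^ 2
  have hY : y * conj y = N := by simp [N, mul_conj']
  have hZ : z * conj z = N := by simp [N, mul_conj', habs]
  have hconj : (1 + conj y) * (1 + conj z) * (conj y + conj z) = k * conj y * conj z := by
    simpa using congrArg conj hcurve
  have hN : N * ((y + z) * (1 - N) * (y * z - N)) = 0 := by
    -- the `hY`, `hZ` terms perform the substitutions `y * conj y = N`, `z * conj z = N`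
    linear_combination y ^ 2 * z ^ 2 * hconj - N ^ 2 * hcurve
      - (z * (1 + conj z) * (y * z * (conj y + conj z)) + (y + N) * (z + N) * z
          - k * y * z * (z * conj z)) * hY
      - ((y + N) * (y * z * (conj y + conj z)) + (y + N) * (z + N) * y - k * y * z * N) * hZ
  rcases mul_eq_zero.mp hN with hN0 | h
  · have hy : y = 0 := by simpa [N] using hN0
    have hz : z = 0 := by simpa [hy] using habs.symm
    simp [hy, hz]
  · exact h

theorem curve_param_eq_sq_norm_sub_one (k : ℝ) {y z : ℂ} (hy : ‖y‖ = 1) (hz : ‖z‖ = 1)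
    (hcurve : (1 + y) * (1 + z) * (y + z) = (k : ℂ) * y * z) :
    k = ‖1 + y + z‖ ^ 2 - 1 := by
  have hY : y * conj y = 1 := by simp [mul_conj', hy]
  have hZ : z * conj z = 1 := by simp [mul_conj', hz]
  have hyz : y * z ≠ 0 := by
    apply mul_ne_zero <;> rintro rfl <;> simp_all
  have h : y * z * k = y * z * (‖1 + y + z‖ ^ 2 - 1 : ℝ) := by
    push_cast
    rw [← mul_conj']
    simp only [map_add, map_one]
    linear_combination -hcurve - z * (1 + y + z) * hY - y * (1 + y + z) * hZ
  exact_mod_cast mul_left_cancel₀ hyz h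

theorem curve_param_mem_Icc_of_norm_eq_one (k : ℝ) {y z : ℂ} (hy : ‖y‖ = 1) (hz : ‖z‖ = 1)
    (hcurve : (1 + y) * (1 + z) * (y + z) = (k : ℂ) * y * z) :
    k ∈ Set.Icc (-1) 8 := by
  have hle : ‖1 + y + z‖ ≤ 3 := by
    linarith [norm_add₃_le (a := (1 : ℂ)) (b := y) (c := z), norm_one (α := ℂ)]
  rw [curve_param_eq_sq_norm_sub_one k hy hz hcurve]
  constructor <;> nlinarith [norm_nonneg (1 + y + z)]

theorem imaginary_points_g_general (k : ℝ) (hk : k < -1 ∨ 8 < k) (y z : ℂ)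
    (hy : y ≠ 0) (habs : ‖y‖ = ‖z‖)
    (hcurve : (1 + y) * (1 + z) * (y + z) = (k : ℂ) * y * z) :
    z = starRingEnd ℂ y := by
  have hk0 : (k : ℂ) ≠ 0 := by
    norm_cast
    rintro rfl
    norm_num at hk
  rcases mul_eq_zero.mp (curve_factorization_of_norm_eq k habs hcurve) with h | hyz
  · rcases mul_eq_zero.mp h with hsum | hunit
    · obtain rfl := eq_neg_of_add_eq_zero_right hsum
      simp [hy, hk0] at hcurve
    · have hy1 : ‖y‖ = 1 := by
        have : (‖y‖ : ℂ) ^ 2 = 1 := by linear_combination -hunit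
        exact (pow_eq_one_iff_of_nonneg (norm_nonneg y) two_ne_zero).mp (by exact_mod_cast this)
      have hIcc := curve_param_mem_Icc_of_norm_eq_one k hy1 (habs ▸ hy1) hcurve
      rcases hk with hk | hk <;> linarith [hIcc.1, hIcc.2]
  · apply mul_left_cancel₀ hy
    rw [mul_conj']
    linear_combination hyz

/-- For real `k` with `k < -1` or `k > 8`, every point of the curve
`(1+y)(1+z)(y+z) = kyz` with `y, z ≠ 0` and `|y| = |z|` is an "imaginary point",
i.e. satisfies `z = conj y`. -/
theorem imaginary_points_g (k : ℝ) (hk : k < -1 ∨ 8 < k) (y z : ℂ)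
    (hy : y ≠ 0) (hz : z ≠ 0) (habs : ‖y‖ = ‖z‖)
    (hcurve : (1 + y) * (1 + z) * (y + z) = (k : ℂ) * y * z) :
    z = starRingEnd ℂ y :=
  imaginary_points_g_general k hk y z hy habs hcurve
end

section
/- Let k ∈ ℂ and let y, z ∈ ℂ satisfy y³ + z³ + 1 = k·yz. Then the point (X', Y') = (−yz, y³) satisfies Y'² + k·X'Y' + Y' = X'³; that is, (y,z) ↦ (−yz, y³) maps the curve y³ + z³ + 1 = kyz (in Deuring form D(k+6, k²+3k+9)) to the Deuring curve D(k, 1). -/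
theorem deuring_eq_of_cubic {R : Type*} [CommRing R] {k y z : R}
    (h : y ^ 3 + z ^ 3 + 1 = k * y * z) :
    (y ^ 3) ^ 2 + k * -(y * z) * y ^ 3 + y ^ 3 = (-(y * z)) ^ 3 := by
  linear_combination y ^ 3 * h

/-- The degree-3 isogeny `ρ_k : D(k+6, k²+3k+9) → D(k, 1)` in the coordinates of
the cubic `y³ + z³ + 1 = kyz`: the point `(X', Y') = (-yz, y³)` satisfies the
Deuring equation `Y'² + kX'Y' + Y' = X'³`. -/
theorem isogeny_three_n (k y z : ℂ) (hcurve : y ^ 3 + z ^ 3 + 1 = k * y * z) :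
    letI X' : ℂ := -(y * z)
    letI Y' : ℂ := y ^ 3
    Y' ^ 2 + k * X' * Y' + Y' = X' ^ 3 :=
  deuring_eq_of_cubic hcurve
end

section
/- Let k ∈ ℂ and let (X, Y) ∈ ℂ² satisfy Y² + (k−2)·XY + k·Y = X³ with X ≠ −1. Set X' = X(X−k)/(X+1) and Y' = (Y + kX)(Y + X²)/(X+1)². Then Y'² + (−k−4)·X'Y' + (−k²)·Y' = X'³; that is, the map (X,Y) ↦ (X',Y') sends points of the Deuring curve D(k−2, k) to points of the Deuring curve D(−k−4, −k²). -/
section Deuring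

variable {K : Type*} [Field K]

def deuringPoly (a₁ a₃ X Y : K) : K :=
  Y ^ 2 + a₁ * X * Y + a₃ * Y - X ^ 3

theorem deuringPoly_isogeny_two (k X Y : K) (hX : X + 1 ≠ 0) :
    deuringPoly (-k - 4) (-k ^ 2) (X * (X - k) / (X + 1))
        ((Y + k * X) * (Y + X ^ 2) / (X + 1) ^ 2) =
      (Y ^ 2 + 2 * X * Y + 2 * X ^ 2 * Y + X ^ 3 + X ^ 4 - k * Y + k * X * Y + k * X ^ 2
          + k * X ^ 3 - k ^ 2 * X) * deuringPoly (k - 2) k X Y / (X + 1) ^ 4 := by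
  unfold deuringPoly
  field_simp
  ring

end Deuring

/-- The degree-2 isogeny `D(k-2, k) → D(-k-4, -k²)` with kernel generated by the
2-torsion point `Q = (-1, -1)`, in affine coordinates: if `(X, Y)` satisfies
`Y² + (k-2)XY + kY = X³` and `X ≠ -1`, then
`(X', Y') = (X(X-k)/(X+1), (Y+kX)(Y+X²)/(X+1)²)` satisfies
`Y'² + (-k-4)X'Y' + (-k²)Y' = X'³`. -/
theorem isogeny_two_g (k X Y : ℂ) (hcurve : Y ^ 2 + (k - 2) * X * Y + k * Y = X ^ 3)
    (hX : X ≠ -1) :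
    letI X' : ℂ := X * (X - k) / (X + 1)
    letI Y' : ℂ := (Y + k * X) * (Y + X ^ 2) / (X + 1) ^ 2
    Y' ^ 2 + (-k - 4) * X' * Y' + (-k ^ 2) * Y' = X' ^ 3 := by
  have hX₁ : X + 1 ≠ 0 := fun h => hX (eq_neg_of_add_eq_zero_left h)
  have hD : deuringPoly (k - 2) k X Y = 0 := sub_eq_zero.mpr hcurve
  have hD' := deuringPoly_isogeny_two k X Y hX₁
  rw [hD, mul_zero, zero_div] at hD'
  exact sub_eq_zero.mp hD'
end

section
/- Let K be a field of characteristic zero and ξ ∈ K a root of t³ − 2t² − t + 1. On the elliptic curve W : Y² − XY + Y = X³ over K (the Deuring curve D(−1,1), which is the curve 14A4), the point A = (ξ, ξ² − 1) lies on W, the point A has order exactly 9 in the group of points of W, and 3·A = P where P = (0,0). -/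
/-!
On every Deuring curve `D(a₁, a₃)` with `a₃ ≠ 0` the tangent at `P = (0, 0)` is `Y = 0`,
which meets the curve in `X³ = 0`; so `P` is a flex, `2P = -P = (0, -a₃)` and `P` has order `3`.
On `14A4`, the tangent at `A = (ξ, ξ² - 1)` has slope `ξ² - ξ` and gives `2A = (ξ² - 2ξ, ξ - 2)`,
and the chord through `A` and `2A` is `Y = ξX - 1`, which passes through `-P = (0, -1)`; so
`3A = P` and `A` has order `9`. The denominators of the two slopes, `(ξ - 1)(2ξ + 1)` and
`ξ(ξ - 3)`, are nonzero because `t³ - 2t² - t + 1` takes the values `-1`, `7/8`, `1`, `7` at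
`1`, `-1/2`, `0`, `3`; all points are nonsingular because `Δ(14A4) = -28`.
-/

open WeierstrassCurve

namespace WeierstrassCurve.Affine.Point

variable {F : Type*} [Field F] [DecidableEq F] {W : Affine F}

lemma some_add_some_of_X_ne {x₁ x₂ x₃ y₁ y₂ y₃ ℓ : F} {h₁ : W.Nonsingular x₁ y₁}
    {h₂ : W.Nonsingular x₂ y₂} {h₃ : W.Nonsingular x₃ y₃} (hx : x₁ ≠ x₂)
    (hℓ : y₁ - y₂ = ℓ * (x₁ - x₂)) (hx₃ : W.addX x₁ x₂ ℓ = x₃) (hy₃ : W.addY x₁ x₂ y₁ ℓ = y₃) :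
    some _ _ h₁ + some _ _ h₂ = some _ _ h₃ := by
  have hslope : W.slope x₁ x₂ y₁ y₂ = ℓ := by
    rw [slope_of_X_ne hx, div_eq_iff (sub_ne_zero.mpr hx), hℓ]
  rw [add_of_X_ne hx, some.injEq, hslope]
  exact ⟨hx₃, hy₃⟩

lemma some_add_self_of_Y_ne {x₁ x₃ y₁ y₃ ℓ : F} {h₁ : W.Nonsingular x₁ y₁}
    {h₃ : W.Nonsingular x₃ y₃} (hy : y₁ ≠ W.negY x₁ y₁)
    (hℓ : 3 * x₁ ^ 2 + 2 * W.a₂ * x₁ + W.a₄ - W.a₁ * y₁ = ℓ * (y₁ - W.negY x₁ y₁))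
    (hx₃ : W.addX x₁ x₁ ℓ = x₃) (hy₃ : W.addY x₁ x₁ y₁ ℓ = y₃) :
    some _ _ h₁ + some _ _ h₁ = some _ _ h₃ := by
  have hslope : W.slope x₁ x₁ y₁ y₁ = ℓ := by
    rw [slope_of_Y_ne rfl hy, div_eq_iff (sub_ne_zero.mpr hy), hℓ]
  rw [add_self_of_Y_ne hy, some.injEq, hslope]
  exact ⟨hx₃, hy₃⟩

end WeierstrassCurve.Affine.Point

theorem addOrderOf_eq_sq_of_addOrderOf_nsmul_eq_prime {G : Type*} [AddMonoid G] {p : ℕ}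
    [hp : Fact p.Prime] {x : G} (h : addOrderOf (p • x) = p) : addOrderOf x = p ^ 2 := by
  refine addOrderOf_eq_prime_pow (n := 1) ?_ ?_
  · intro h0
    rw [pow_one] at h0
    rw [h0, addOrderOf_zero] at h
    exact hp.out.one_lt.ne h
  · rw [pow_two, mul_nsmul]
    nth_rewrite 1 [← h]
    exact addOrderOf_nsmul_eq_zero _

section DeuringCurve

variable {F : Type*} [Field F]

def deuringCurve (a₁ a₃ : F) : Affine F := ⟨a₁, 0, a₃, 0, 0⟩

lemma deuringCurve_Δ (a₁ a₃ : F) : (deuringCurve a₁ a₃).Δ = a₃ ^ 3 * (a₁ ^ 3 - 27 * a₃) := by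
  simp only [deuringCurve, Δ, b₂, b₄, b₆, b₈]
  ring

lemma deuringCurve_nonsingular_zero {a₁ a₃ : F} (ha₃ : a₃ ≠ 0) :
    (deuringCurve a₁ a₃).Nonsingular 0 0 := by
  rw [Affine.nonsingular_iff, Affine.equation_iff]
  simpa [deuringCurve] using ha₃

lemma deuringCurve_some_zero_add_self [DecidableEq F] {a₁ a₃ : F} (ha₃ : a₃ ≠ 0)
    {hP : (deuringCurve a₁ a₃).Nonsingular 0 0} :
    Affine.Point.some _ _ hP + Affine.Point.some _ _ hP = -Affine.Point.some _ _ hP := by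
  refine Affine.Point.some_add_self_of_Y_ne (ℓ := 0) ?_ ?_ ?_ ?_ <;>
    simp [deuringCurve, Affine.negY, Affine.addY, ha₃]

theorem addOrderOf_deuringCurve_zero [DecidableEq F] {a₁ a₃ : F} (ha₃ : a₃ ≠ 0)
    {hP : (deuringCurve a₁ a₃).Nonsingular 0 0} :
    addOrderOf (Affine.Point.some _ _ hP) = 3 := by
  have : Fact (Nat.Prime 3) := ⟨Nat.prime_three⟩
  refine addOrderOf_eq_prime ?_ (Affine.Point.some_ne_zero hP)
  rw [succ_nsmul, two_nsmul, deuringCurve_some_zero_add_self ha₃, neg_add_cancel]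

end DeuringCurve

namespace Curve14a4

variable {K : Type*} [Field K] {ξ : K}

lemma Δ_ne_zero [CharZero K] : (deuringCurve (-1 : K) 1).Δ ≠ 0 := by
  rw [deuringCurve_Δ]
  norm_num

lemma nonsingular_of_equation [CharZero K] {x y : K}
    (h : (deuringCurve (-1 : K) 1).Equation x y) :
    (deuringCurve (-1 : K) 1).Nonsingular x y :=
  (Affine.equation_iff_nonsingular_of_Δ_ne_zero Δ_ne_zero).mp h

variable (hξ : ξ ^ 3 - 2 * ξ ^ 2 - ξ + 1 = 0)
include hξ

lemma equation_A : (deuringCurve (-1) 1).Equation ξ (ξ ^ 2 - 1) := by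
  rw [Affine.equation_iff]
  simp only [deuringCurve]
  linear_combination ξ * hξ

lemma equation_B : (deuringCurve (-1) 1).Equation (ξ ^ 2 - 2 * ξ) (ξ - 2) := by
  rw [Affine.equation_iff]
  simp only [deuringCurve]
  linear_combination (2 - 5 * ξ + 4 * ξ ^ 2 - ξ ^ 3) * hξ

variable [CharZero K] [DecidableEq K]

lemma A_add_A {hA : (deuringCurve (-1) 1).Nonsingular ξ (ξ ^ 2 - 1)}
    {hB : (deuringCurve (-1) 1).Nonsingular (ξ ^ 2 - 2 * ξ) (ξ - 2)} :
    Affine.Point.some _ _ hA + Affine.Point.some _ _ hA = Affine.Point.some _ _ hB := by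
  have h1 : ξ - 1 ≠ 0 := by
    intro h
    obtain rfl : ξ = 1 := by linear_combination h
    norm_num at hξ
  have h2 : 2 * ξ + 1 ≠ 0 := by
    intro h
    obtain rfl : ξ = -1 / 2 := by linear_combination h / 2
    norm_num at hξ
  refine Affine.Point.some_add_self_of_Y_ne (ℓ := ξ ^ 2 - ξ) ?_ ?_ ?_ ?_ <;>
    simp only [deuringCurve, Affine.negY, Affine.addX, Affine.addY, Affine.negAddY]
  · intro h
    exact mul_ne_zero h1 h2 (by linear_combination h)
  · linear_combination (-1 - 2 * ξ) * hξ
  · linear_combination ξ * hξ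
  · linear_combination (2 + ξ ^ 2 - ξ ^ 3) * hξ

lemma A_add_B {hA : (deuringCurve (-1) 1).Nonsingular ξ (ξ ^ 2 - 1)}
    {hB : (deuringCurve (-1) 1).Nonsingular (ξ ^ 2 - 2 * ξ) (ξ - 2)}
    {hP : (deuringCurve (-1 : K) 1).Nonsingular 0 0} :
    Affine.Point.some _ _ hA + Affine.Point.some _ _ hB = Affine.Point.some _ _ hP := by
  have h0 : ξ ≠ 0 := by
    rintro rfl
    norm_num at hξ
  have h3 : ξ - 3 ≠ 0 := by
    intro h
    obtain rfl : ξ = 3 := by linear_combination h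
    norm_num at hξ
  refine Affine.Point.some_add_some_of_X_ne (ℓ := ξ) ?_ ?_ ?_ ?_
  · intro h
    exact mul_ne_zero h0 h3 (by linear_combination -h)
  · linear_combination hξ
  all_goals
    simp only [deuringCurve, Affine.negY, Affine.addX, Affine.addY, Affine.negAddY]
    ring

lemma three_nsmul_A {hA : (deuringCurve (-1) 1).Nonsingular ξ (ξ ^ 2 - 1)}
    {hP : (deuringCurve (-1 : K) 1).Nonsingular 0 0} :
    3 • Affine.Point.some _ _ hA = Affine.Point.some _ _ hP := by
  rw [succ_nsmul, two_nsmul, A_add_A hξ (hB := nonsingular_of_equation (equation_B hξ)),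
    add_comm, A_add_B hξ]

end Curve14a4

open Classical in
/-- On the elliptic curve `14A4 : Y² - XY + Y = X³` (the Deuring curve `D(-1,1)`)
over a field `K` of characteristic zero, if `ξ` is a root of `t³ - 2t² - t + 1`,
then `A = (ξ, ξ² - 1)` is a nonsingular point of the curve of order exactly `9`
with `3·A = P` where `P = (0,0)`. -/
theorem point_A_order_nine (K : Type*) [Field K] [CharZero K] (ξ : K)
    (hξ : ξ ^ 3 - 2 * ξ ^ 2 - ξ + 1 = 0) :
    letI W : WeierstrassCurve.Affine K := ⟨-1, 0, 1, 0, 0⟩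
    W.Equation ξ (ξ ^ 2 - 1) ∧
    ∃ (hA : W.Nonsingular ξ (ξ ^ 2 - 1)) (hP : W.Nonsingular 0 0),
      addOrderOf (WeierstrassCurve.Affine.Point.some _ _ hA) = 9 ∧
      (3 : ℤ) • (WeierstrassCurve.Affine.Point.some _ _ hA) =
        WeierstrassCurve.Affine.Point.some _ _ hP := by
  have hA := Curve14a4.nonsingular_of_equation (Curve14a4.equation_A hξ)
  have hP := deuringCurve_nonsingular_zero (a₁ := (-1 : K)) one_ne_zero
  have h3A := Curve14a4.three_nsmul_A hξ (hA := hA) (hP := hP)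
  refine ⟨Curve14a4.equation_A hξ, hA, hP, ?_, by exact_mod_cast h3A⟩
  have : Fact (Nat.Prime 3) := ⟨Nat.prime_three⟩
  exact addOrderOf_eq_sq_of_addOrderOf_nsmul_eq_prime
    (h3A ▸ addOrderOf_deuringCurve_zero one_ne_zero)
end

section
/- Let a, b ∈ ℂ with 4a³ + 27b² ≠ 0 and let E : y² = x³ + ax + b. Let p ∈ E(ℂ) be a point of order exactly 3, and let r₁, r₂ be two distinct points of order exactly 2. Then the tangent line to E at p is parallel to the line through 2p + r₁ and 2p + r₂; that is, (3x(p)² + a)/(2y(p)) = (y(2p + r₂) − y(2p + r₁))/(x(2p + r₂) − x(2p + r₁)), where the points 2p + r₁ and 2p + r₂ are distinct with distinct x-coordinates, and x(·), y(·) denote coordinates and addition is the elliptic curve group law. -/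
/-! Since `3p = 0` we have `2p = -p`, and `p` is a flex: `x(2p) = x(p)`. Translation by a
`2`-torsion point `(e, 0)` is an explicit rational map, so both slopes are rational functions of
the coordinates of `p` and of the roots `e₁, e₂`, and their equality is a polynomial identity
modulo the curve equation and the flex condition. -/

/-- The affine Weierstrass curve `y² = x³ + ax + b`. -/
def Wab (a b : ℂ) : WeierstrassCurve.Affine ℂ := ⟨0, 0, 0, a, b⟩

/-- The `x`-coordinate of a nonsingular affine point (junk value `0` at infinity). -/
noncomputable def ptx {F : Type*} [Field F] {W : WeierstrassCurve.Affine F} : W.Point → F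
  | .zero => 0
  | .some (x := x) _ _ => x

/-- The `y`-coordinate of a nonsingular affine point (junk value `0` at infinity). -/
noncomputable def pty {F : Type*} [Field F] {W : WeierstrassCurve.Affine F} : W.Point → F
  | .zero => 0
  | .some (y := y) _ _ => y

open WeierstrassCurve WeierstrassCurve.Affine

instance (a b : ℂ) : (Wab a b).IsShortNF := ⟨rfl, rfl, rfl⟩

@[simp]
lemma ptx_some {F : Type*} [Field F] {W : Affine F} {x y : F} (h : W.Nonsingular x y) :
    ptx (Point.some x y h) = x :=
  rfl

@[simp]
lemma pty_some {F : Type*} [Field F] {W : Affine F} {x y : F} (h : W.Nonsingular x y) :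
    pty (Point.some x y h) = y :=
  rfl

lemma two_zsmul_eq_neg_of_addOrderOf_eq_three {G : Type*} [AddGroup G] {g : G}
    (h : addOrderOf g = 3) : (2 : ℤ) • g = -g := by
  refine eq_neg_of_add_eq_zero_left ?_
  rw [← add_one_zsmul, show (2 : ℤ) + 1 = ((3 : ℕ) : ℤ) by norm_num, natCast_zsmul, ← h,
    addOrderOf_nsmul_eq_zero]

lemma depressed_cubic_coeffs_of_roots {F : Type*} [Field F] {a b e₁ e₂ : F}
    (he₁ : e₁ ^ 3 + a * e₁ + b = 0) (he₂ : e₂ ^ 3 + a * e₂ + b = 0) (he : e₁ ≠ e₂) :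
    a = -(e₁ ^ 2 + e₁ * e₂ + e₂ ^ 2) ∧ b = e₁ * e₂ * (e₁ + e₂) := by
  have ha : a = -(e₁ ^ 2 + e₁ * e₂ + e₂ ^ 2) := by
    have h : (e₁ - e₂) * (e₁ ^ 2 + e₁ * e₂ + e₂ ^ 2 + a) = 0 := by linear_combination he₁ - he₂
    linear_combination (mul_eq_zero.1 h).resolve_left (sub_ne_zero.2 he)
  exact ⟨ha, by linear_combination he₁ - e₁ * ha⟩

/- With `e₃ = -e₁ - e₂` the third root and `uᵢ = x₀ - eᵢ`, the curve equation reads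
`y₀² = u₁u₂u₃` and the flex condition reads `σ₂² = 4σ₁σ₃` in the elementary symmetric functions of
the `uᵢ` (note `σ₁ = 3x₀`). Both the equality of slopes (after cancelling `u₁ - u₂`) and the
non-verticality of the chord come from `σ₂² - 4σ₁σ₃ = (u₃(u₁ + u₂) - u₁u₂)² - 4u₁u₂u₃²`. -/
theorem tangent_slope_eq_chord_slope_of_flex {F : Type*} [Field F] [NeZero (2 : F)]
    {a b x₀ y₀ e₁ e₂ X₁ X₂ Y₁ Y₂ : F} (hy : y₀ ^ 2 = x₀ ^ 3 + a * x₀ + b) (hy₀ : y₀ ≠ 0)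
    (hflex : (3 * x₀ ^ 2 + a) ^ 2 = 12 * x₀ * y₀ ^ 2)
    (he₁ : e₁ ^ 3 + a * e₁ + b = 0) (he₂ : e₂ ^ 3 + a * e₂ + b = 0) (he : e₁ ≠ e₂)
    (hx₁ : x₀ ≠ e₁) (hx₂ : x₀ ≠ e₂)
    (hX₁ : X₁ = e₁ + (3 * e₁ ^ 2 + a) / (x₀ - e₁)) (hX₂ : X₂ = e₂ + (3 * e₂ ^ 2 + a) / (x₀ - e₂))
    (hY₁ : Y₁ = y₀ * (3 * e₁ ^ 2 + a) / (x₀ - e₁) ^ 2)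
    (hY₂ : Y₂ = y₀ * (3 * e₂ ^ 2 + a) / (x₀ - e₂) ^ 2) :
    X₁ ≠ X₂ ∧ (3 * x₀ ^ 2 + a) / (2 * y₀) = (Y₂ - Y₁) / (X₂ - X₁) := by
  obtain ⟨rfl, rfl⟩ := depressed_cubic_coeffs_of_roots he₁ he₂ he
  have hu₁ : x₀ - e₁ ≠ 0 := sub_ne_zero.2 hx₁
  have hu₂ : x₀ - e₂ ≠ 0 := sub_ne_zero.2 hx₂
  have hu₁₂ : (x₀ - e₁) - (x₀ - e₂) ≠ 0 := by
    rw [sub_sub_sub_cancel_left]; exact sub_ne_zero.2 he.symm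
  set u₁ := x₀ - e₁
  set u₂ := x₀ - e₂
  set u₃ := x₀ + e₁ + e₂
  have hσ₂ : 3 * x₀ ^ 2 + -(e₁ ^ 2 + e₁ * e₂ + e₂ ^ 2) = u₁ * u₂ + u₁ * u₃ + u₂ * u₃ := by ring
  have hy' : y₀ ^ 2 = u₁ * u₂ * u₃ := by linear_combination hy
  have hflex' : (u₁ * u₂ + u₁ * u₃ + u₂ * u₃) ^ 2 = 4 * (u₁ + u₂ + u₃) * (u₁ * u₂ * u₃) := by
    linear_combination hflex + 12 * x₀ * hy'
  have hkey : 2 * u₃ * ((u₃ - u₂) * u₁ ^ 2 + (u₃ - u₁) * u₂ ^ 2) =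
      (u₁ * u₂ + u₁ * u₃ + u₂ * u₃) * (u₃ * (u₁ + u₂) - u₁ * u₂) := by
    linear_combination hflex'
  have hX : X₂ - X₁ = (u₁ - u₂) * (u₃ * (u₁ + u₂) - u₁ * u₂) / (u₁ * u₂) := by
    rw [hX₁, hX₂]; field_simp; ring
  have hY : Y₂ - Y₁ =
      y₀ * (u₁ - u₂) * ((u₃ - u₂) * u₁ ^ 2 + (u₃ - u₁) * u₂ ^ 2) / (u₁ ^ 2 * u₂ ^ 2) := by
    rw [hY₁, hY₂]; field_simp; ring
  clear_value u₁ u₂ u₃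
  have hu₃ : u₃ ≠ 0 := fun h => hy₀ (pow_eq_zero_iff two_ne_zero |>.1 (by rw [hy', h, mul_zero]))
  have hchord : u₃ * (u₁ + u₂) - u₁ * u₂ ≠ 0 := by
    intro h
    have : (2 * 2) * (u₁ * u₂ * u₃) * u₃ = 0 := by
      linear_combination (u₃ * (u₁ + u₂) - u₁ * u₂) * h - hflex'
    simp [hu₁, hu₂, hu₃, two_ne_zero] at this
  have hX₁₂ : X₂ - X₁ ≠ 0 := by
    rw [hX]; exact div_ne_zero (mul_ne_zero hu₁₂ hchord) (mul_ne_zero hu₁ hu₂)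
  refine ⟨fun h => hX₁₂ (by rw [h, sub_self]), ?_⟩
  rw [div_eq_div_iff (mul_ne_zero two_ne_zero hy₀) hX₁₂, hX, hY, hσ₂]
  field_simp
  linear_combination -(u₁ * u₂) * hkey - 2 * ((u₃ - u₂) * u₁ ^ 2 + (u₃ - u₁) * u₂ ^ 2) * hy'

namespace WeierstrassCurve.Affine

variable {F : Type*} [Field F] {W : Affine F} [W.IsShortNF]

lemma negY_of_isShortNF (x y : F) : W.negY x y = -y := by
  simp

lemma equation_iff_of_isShortNF (x y : F) :
    W.Equation x y ↔ y ^ 2 = x ^ 3 + W.a₄ * x + W.a₆ := by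
  simp [equation_iff, a₂_of_isShortNF]

lemma X_ne_of_Y_ne_zero {x y e : F} (h : W.Equation x y) (he : W.Equation e 0) (hy : y ≠ 0) :
    x ≠ e := by
  intro hx
  rcases Y_eq_of_X_eq h he hx with h | h <;> simp [hy] at h

namespace Point

variable [DecidableEq F]

lemma exists_eq_some_zero_of_addOrderOf_eq_two [NeZero (2 : F)] {T : W.Point}
    (hT : addOrderOf T = 2) : ∃ (e : F) (he : W.Nonsingular e 0), T = some e 0 he := by
  rcases T with _ | ⟨e, f, he⟩
  · simp [← zero_def] at hT
  · have hneg : -some e f he = some e f he :=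
      neg_eq_of_add_eq_zero_left (by rw [← two_nsmul, ← hT, addOrderOf_nsmul_eq_zero])
    rw [neg_some, some.injEq, negY_of_isShortNF] at hneg
    obtain rfl : f = 0 := by
      have h2f : 2 * f = 0 := by linear_combination -hneg.2
      exact (mul_eq_zero.1 h2f).resolve_left two_ne_zero
    exact ⟨e, he, rfl⟩

/- The doubling formula gives `x(2P) = ℓ² - 2x` for the tangent slope `ℓ = (3x² + a₄)/(2y)`, and
`2P = -P` forces `x(2P) = x`. -/
lemma flex_of_addOrderOf_eq_three [NeZero (2 : F)] {x y : F} {h : W.Nonsingular x y}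
    (hP : addOrderOf (some x y h) = 3) :
    y ≠ 0 ∧ (3 * x ^ 2 + W.a₄) ^ 2 = 12 * x * y ^ 2 := by
  have h2P : some x y h + some x y h = -some x y h := by
    rw [← two_zsmul, two_zsmul_eq_neg_of_addOrderOf_eq_three hP]
  have hy : y ≠ 0 := by
    rintro rfl
    have hneg : -some x 0 h = some x 0 h := by simp [neg_some]
    rw [hneg, add_eq_right] at h2P
    exact some_ne_zero h h2P
  have hy' : y ≠ W.negY x y := by
    rw [negY_of_isShortNF]
    intro h'
    exact hy ((mul_eq_zero.1 (by linear_combination h' : 2 * y = 0)).resolve_left two_ne_zero)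
  have hℓ : W.slope x x y y = (3 * x ^ 2 + W.a₄) / (2 * y) := by
    rw [slope_of_Y_ne rfl hy']
    simp only [negY_of_isShortNF, a₁_of_isShortNF, a₂_of_isShortNF]
    ring
  have hx := congrArg ptx (h2P.symm.trans (add_self_of_Y_ne hy'))
  rw [neg_some, ptx_some, ptx_some, hℓ] at hx
  simp only [addX, a₁_of_isShortNF, a₂_of_isShortNF] at hx
  refine ⟨hy, ?_⟩
  field_simp at hx
  linear_combination -hx

/- Translation by the `2`-torsion point `(e, 0)`: the chord slope is `ℓ = y/(x - e)`, and
`ℓ² = (x² + ex + e² + a₄)/(x - e)` because `e` is a root of the cubic. -/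
lemma ptx_add_some_zero {x y e : F} (h : W.Nonsingular x y) (he : W.Nonsingular e 0)
    (hx : x ≠ e) : ptx (some x y h + some e 0 he) = e + (3 * e ^ 2 + W.a₄) / (x - e) := by
  have hxy := (equation_iff_of_isShortNF x y).1 h.1
  have he' := (equation_iff_of_isShortNF e 0).1 he.1
  rw [add_of_X_ne hx, ptx_some, slope_of_X_ne hx]
  simp only [addX, a₁_of_isShortNF, a₂_of_isShortNF]
  field_simp [sub_ne_zero.2 hx]
  linear_combination hxy - he'

lemma pty_add_some_zero {x y e : F} (h : W.Nonsingular x y) (he : W.Nonsingular e 0)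
    (hx : x ≠ e) :
    pty (some x y h + some e 0 he) = W.negY x y * (3 * e ^ 2 + W.a₄) / (x - e) ^ 2 := by
  have hxy := (equation_iff_of_isShortNF x y).1 h.1
  have he' := (equation_iff_of_isShortNF e 0).1 he.1
  rw [add_of_X_ne hx, pty_some, slope_of_X_ne hx]
  simp only [addY, negAddY, addX, negY_of_isShortNF, a₁_of_isShortNF, a₂_of_isShortNF]
  field_simp [sub_ne_zero.2 hx]
  linear_combination -y * (hxy - he')

end Point

end WeierstrassCurve.Affine

open WeierstrassCurve.Affine.Point in
theorem tangent_parallel_two_torsion_chord_general (a b : ℂ)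
    (p r₁ r₂ : (Wab a b).Point)
    (hp : addOrderOf p = 3) (hr₁ : addOrderOf r₁ = 2) (hr₂ : addOrderOf r₂ = 2)
    (hne : r₁ ≠ r₂) :
    (2 : ℤ) • p + r₁ ≠ (2 : ℤ) • p + r₂ ∧
    ptx ((2 : ℤ) • p + r₁) ≠ ptx ((2 : ℤ) • p + r₂) ∧
    (3 * ptx p ^ 2 + a) / (2 * pty p) =
      (pty ((2 : ℤ) • p + r₂) - pty ((2 : ℤ) • p + r₁)) /
        (ptx ((2 : ℤ) • p + r₂) - ptx ((2 : ℤ) • p + r₁)) := by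
  obtain ⟨e₁, he₁, rfl⟩ := exists_eq_some_zero_of_addOrderOf_eq_two hr₁
  obtain ⟨e₂, he₂, rfl⟩ := exists_eq_some_zero_of_addOrderOf_eq_two hr₂
  have he : e₁ ≠ e₂ := by rintro rfl; exact hne rfl
  rcases p with _ | ⟨x₀, y₀, hp₀⟩
  · simp [← zero_def] at hp
  obtain ⟨hy₀, hflex⟩ := flex_of_addOrderOf_eq_three hp
  have hx₁ := X_ne_of_Y_ne_zero hp₀.1 he₁.1 hy₀
  have hx₂ := X_ne_of_Y_ne_zero hp₀.1 he₂.1 hy₀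
  have hcurve := ((Wab a b).equation_iff_of_isShortNF x₀ y₀).1 hp₀.1
  have hroot₁ := ((Wab a b).equation_iff_of_isShortNF e₁ 0).1 he₁.1
  have hroot₂ := ((Wab a b).equation_iff_of_isShortNF e₂ 0).1 he₂.1
  have hq₀ := (nonsingular_neg x₀ y₀).2 hp₀
  have hY₁ := pty_add_some_zero hq₀ he₁ hx₁
  have hY₂ := pty_add_some_zero hq₀ he₂ hx₂
  rw [negY_negY] at hY₁ hY₂
  rw [two_zsmul_eq_neg_of_addOrderOf_eq_three hp, neg_some]
  obtain ⟨hX, hslope⟩ := tangent_slope_eq_chord_slope_of_flex hcurve hy₀ hflex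
    (by linear_combination -hroot₁) (by linear_combination -hroot₂) he hx₁ hx₂
    (ptx_add_some_zero hq₀ he₁ hx₁) (ptx_add_some_zero hq₀ he₂ hx₂) hY₁ hY₂
  exact ⟨fun h => hX (congrArg ptx h), hX, hslope⟩

/-- On `E : y² = x³ + ax + b`, if `p` has order exactly `3` and `r₁ ≠ r₂` have
order exactly `2`, then the points `2p + r₁` and `2p + r₂` are distinct with
distinct `x`-coordinates, and the tangent line to `E` at `p` is parallel to the
line through `2p + r₁` and `2p + r₂`: the tangent slope `(3x(p)² + a)/(2y(p))`
equals the chord slope of `2p + r₁`, `2p + r₂`. -/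
theorem tangent_parallel_two_torsion_chord (a b : ℂ) (hD : 4 * a ^ 3 + 27 * b ^ 2 ≠ 0)
    (p r₁ r₂ : (Wab a b).Point)
    (hp : addOrderOf p = 3) (hr₁ : addOrderOf r₁ = 2) (hr₂ : addOrderOf r₂ = 2)
    (hne : r₁ ≠ r₂) :
    (2 : ℤ) • p + r₁ ≠ (2 : ℤ) • p + r₂ ∧
    ptx ((2 : ℤ) • p + r₁) ≠ ptx ((2 : ℤ) • p + r₂) ∧
    (3 * ptx p ^ 2 + a) / (2 * pty p) =
      (pty ((2 : ℤ) • p + r₂) - pty ((2 : ℤ) • p + r₁)) /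
        (ptx ((2 : ℤ) • p + r₂) - ptx ((2 : ℤ) • p + r₁)) :=
  tangent_parallel_two_torsion_chord_general a b p r₁ r₂ hp hr₁ hr₂ hne
end

section
/- Let a, p ∈ ℂ. In the ring of formal power series ℂ[[T]], consider the power series (all well-defined since each factor has constant term 1): F = (1 − aT + pT²)⁻¹, G = ((1 − T)(1 − pT))⁻¹, H = (1 − p²T²)·((1 − aT + pT²)(1 − paT + p³T²))⁻¹, F' = (1 − aT)⁻¹, G' = ((1 − aT)(1 − paT))⁻¹. Then for every n ≥ 0: (i) coeff_n(F)·coeff_n(G) = coeff_n(H); (ii) coeff_n(F')·coeff_n(G) = coeff_n(G'); (iii) coeff_n(F')·coeff_n(T·G) = coeff_n(aT·G'). -/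
/-!
Hadamard product with `(1 - aT)⁻¹ = ∑ aⁿTⁿ` is the rescaling `T ↦ aT`, a ring homomorphism,
which gives (ii) and (iii) at once. For (i), the coefficients of `G` are the partial sums
`dₙ = 1 + p + ⋯ + pⁿ` and those of `F` satisfy `cₙ₊₂ = a cₙ₊₁ - p cₙ`; together they give
`(1 - aT + pT²) · (F ∗ G) = (1 - p²T²) · F(pT)`, and `F(pT) = (1 - paT + p³T²)⁻¹`.
-/

namespace PowerSeries

section CommSemiring

variable {R : Type*} [CommSemiring R]

noncomputable def hadamard (φ ψ : R⟦X⟧) : R⟦X⟧ :=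
  mk fun n => coeff n φ * coeff n ψ

@[simp]
theorem coeff_hadamard (φ ψ : R⟦X⟧) (n : ℕ) :
    coeff n (hadamard φ ψ) = coeff n φ * coeff n ψ :=
  coeff_mk _ _

@[simp]
theorem constantCoeff_hadamard (φ ψ : R⟦X⟧) :
    constantCoeff (hadamard φ ψ) = constantCoeff φ * constantCoeff ψ := by
  simp only [← coeff_zero_eq_constantCoeff_apply, coeff_hadamard]

@[simp]
theorem constantCoeff_rescale (a : R) (φ : R⟦X⟧) :
    constantCoeff (rescale a φ) = constantCoeff φ := by
  simp only [← coeff_zero_eq_constantCoeff_apply, coeff_rescale, pow_zero, one_mul]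

@[simp]
theorem rescale_C (a r : R) : rescale a (C r) = C r := by
  ext n
  rcases n with _ | n <;> simp [coeff_C]

end CommSemiring

section CommRing

variable {R : Type*} [CommRing R]

theorem rescale_quadratic (a s t : R) :
    rescale a (1 - C s * X + C t * X ^ 2) = 1 - C (a * s) * X + C (a ^ 2 * t) * X ^ 2 := by
  simp only [map_add, map_sub, map_one, map_mul, rescale_C, map_pow, rescale_X]
  ring

theorem coeff_one_quadratic_mul (s t : R) (φ : R⟦X⟧) :
    coeff 1 ((1 - C s * X + C t * X ^ 2) * φ) = coeff 1 φ - s * coeff 0 φ := by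
  simp [add_mul, sub_mul, mul_assoc, coeff_X_pow_mul', coeff_succ_X_mul]

theorem coeff_add_two_quadratic_mul (s t : R) (φ : R⟦X⟧) (n : ℕ) :
    coeff (n + 2) ((1 - C s * X + C t * X ^ 2) * φ) =
      coeff (n + 2) φ - s * coeff (n + 1) φ + t * coeff n φ := by
  simp [add_mul, sub_mul, mul_assoc, coeff_X_pow_mul', coeff_succ_X_mul]

theorem coeff_one_sub_C_mul_X_sq_mul (r : R) (φ : R⟦X⟧) (n : ℕ) :
    coeff n ((1 - C r * X ^ 2) * φ) = coeff n φ - if 2 ≤ n then r * coeff (n - 2) φ else 0 := by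
  rw [sub_mul, one_mul, mul_assoc, map_sub, coeff_C_mul, coeff_X_pow_mul']
  split_ifs <;> simp

end CommRing

section Field

variable {K : Type*} [Field K]

theorem rescale_inv (a : K) (φ : K⟦X⟧) : rescale a φ⁻¹ = (rescale a φ)⁻¹ := by
  by_cases hφ : constantCoeff φ = 0
  · rw [inv_eq_zero.mpr hφ, inv_eq_zero.mpr ((constantCoeff_rescale a φ).trans hφ), map_zero]
  · have hφ' : constantCoeff (rescale a φ) ≠ 0 := (constantCoeff_rescale a φ).symm ▸ hφ
    rw [eq_inv_iff_mul_eq_one hφ', ← map_mul, PowerSeries.inv_mul_cancel _ hφ, map_one]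

theorem inv_one_sub_X : ((1 : K⟦X⟧) - X)⁻¹ = mk 1 :=
  ((eq_inv_iff_mul_eq_one (by simp)).mpr (mk_one_mul_one_sub_eq_one K)).symm

theorem coeff_inv_one_sub_C_mul_X (a : K) (n : ℕ) : coeff n (1 - C a * X)⁻¹ = a ^ n := by
  have : 1 - C a * X = rescale a (1 - X) := by simp
  rw [this, ← rescale_inv, inv_one_sub_X, coeff_rescale, coeff_mk, Pi.one_apply, mul_one]

theorem hadamard_inv_one_sub_C_mul_X (a : K) (φ : K⟦X⟧) :
    hadamard (1 - C a * X)⁻¹ φ = rescale a φ := by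
  ext n
  simp [coeff_inv_one_sub_C_mul_X]

theorem coeff_inv_one_sub_X_mul_one_sub_C_mul_X (t : K) (n : ℕ) :
    coeff n ((1 - X) * (1 - C t * X))⁻¹ = ∑ k ∈ Finset.range (n + 1), t ^ k := by
  rw [PowerSeries.mul_inv_rev, coeff_mul, Finset.Nat.sum_antidiagonal_eq_sum_range_succ_mk]
  simp [coeff_inv_one_sub_C_mul_X, inv_one_sub_X]

theorem coeff_one_inv_quadratic (s t : K) : coeff 1 (1 - C s * X + C t * X ^ 2)⁻¹ = s := by
  have h := congrArg (coeff 1)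
    (PowerSeries.mul_inv_cancel (1 - C s * X + C t * X ^ 2) (by simp))
  rw [coeff_one_quadratic_mul] at h
  simpa [sub_eq_zero] using h

theorem coeff_inv_quadratic_add_two (s t : K) (n : ℕ) :
    coeff (n + 2) (1 - C s * X + C t * X ^ 2)⁻¹ =
      s * coeff (n + 1) (1 - C s * X + C t * X ^ 2)⁻¹ -
        t * coeff n (1 - C s * X + C t * X ^ 2)⁻¹ := by
  have h := congrArg (coeff (n + 2))
    (PowerSeries.mul_inv_cancel (1 - C s * X + C t * X ^ 2) (by simp))
  rw [coeff_add_two_quadratic_mul, coeff_one, if_neg (by omega)] at h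
  linear_combination h

theorem quadratic_mul_hadamard_inv_quadratic (s t : K) :
    (1 - C s * X + C t * X ^ 2) *
        hadamard (1 - C s * X + C t * X ^ 2)⁻¹ ((1 - X) * (1 - C t * X))⁻¹ =
      (1 - C (t ^ 2) * X ^ 2) * rescale t (1 - C s * X + C t * X ^ 2)⁻¹ := by
  ext n
  match n with
  | 0 => simp
  | 1 =>
    have hQ0 : coeff 0 (1 - C s * X + C t * X ^ 2)⁻¹ = 1 := by simp
    simp only [coeff_one_quadratic_mul, coeff_one_sub_C_mul_X_sq_mul, coeff_hadamard,
      coeff_inv_one_sub_X_mul_one_sub_C_mul_X, coeff_one_inv_quadratic, coeff_rescale, hQ0,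
      Finset.sum_range_succ, Finset.sum_range_zero, Nat.not_ofNat_le_one, if_false]
    ring
  | n + 2 =>
    simp only [coeff_add_two_quadratic_mul, coeff_one_sub_C_mul_X_sq_mul, coeff_hadamard,
      coeff_inv_one_sub_X_mul_one_sub_C_mul_X, coeff_inv_quadratic_add_two s t n, coeff_rescale,
      Finset.sum_range_succ, le_add_iff_nonneg_left, zero_le, if_true, Nat.add_sub_cancel]
    ring

theorem hadamard_inv_quadratic (s t : K) :
    hadamard (1 - C s * X + C t * X ^ 2)⁻¹ ((1 - X) * (1 - C t * X))⁻¹ =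
      (1 - C (t ^ 2) * X ^ 2) *
        ((1 - C s * X + C t * X ^ 2) * (1 - C (t * s) * X + C (t ^ 3) * X ^ 2))⁻¹ := by
  have hQ : constantCoeff (1 - C s * X + C t * X ^ 2) ≠ 0 := by simp
  have hrescale : rescale t (1 - C s * X + C t * X ^ 2) =
      1 - C (t * s) * X + C (t ^ 3) * X ^ 2 := by
    rw [rescale_quadratic, ← pow_succ]
  rw [PowerSeries.mul_inv_rev (1 - C s * X + C t * X ^ 2), ← mul_assoc, ← hrescale,
    ← rescale_inv, eq_mul_inv_iff_mul_eq hQ, mul_comm, quadratic_mul_hadamard_inv_quadratic]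

end Field

end PowerSeries

open PowerSeries

/-- Local Euler-factor computations for the Rankin–Selberg convolution: the
coefficientwise (Hadamard) products of the formal power series
`F = (1 - aT + pT²)⁻¹`, `G = ((1 - T)(1 - pT))⁻¹`, `F' = (1 - aT)⁻¹` satisfy
(i) `F ∗ G = (1 - p²T²)·((1 - aT + pT²)(1 - paT + p³T²))⁻¹`,
(ii) `F' ∗ G = ((1 - aT)(1 - paT))⁻¹`, and
(iii) `F' ∗ (T·G) = aT·((1 - aT)(1 - paT))⁻¹`. -/
theorem euler_factor_convolutions (a p : ℂ) :
    letI T : PowerSeries ℂ := PowerSeries.X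
    letI F : PowerSeries ℂ := (1 - C a * T + C p * T ^ 2)⁻¹
    letI G : PowerSeries ℂ := ((1 - T) * (1 - C p * T))⁻¹
    letI H : PowerSeries ℂ := (1 - C (p ^ 2) * T ^ 2) *
      ((1 - C a * T + C p * T ^ 2) *
        (1 - C (p * a) * T + C (p ^ 3) * T ^ 2))⁻¹
    letI F' : PowerSeries ℂ := (1 - C a * T)⁻¹
    letI G' : PowerSeries ℂ := ((1 - C a * T) * (1 - C (p * a) * T))⁻¹
    ∀ n : ℕ,
      coeff n F * coeff n G = coeff n H ∧
      coeff n F' * coeff n G = coeff n G' ∧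
      coeff n F' * coeff n (T * G) = coeff n (C a * T * G') := by
  intro n
  have hG : rescale a ((1 - X) * (1 - C p * X))⁻¹ =
      ((1 - C a * X) * (1 - C (p * a) * X))⁻¹ := by
    simp only [rescale_inv, map_mul, map_sub, map_one, rescale_X, rescale_C]
    ring_nf
  refine ⟨?_, ?_, ?_⟩
  · rw [← coeff_hadamard, hadamard_inv_quadratic]
  · rw [← coeff_hadamard, hadamard_inv_one_sub_C_mul_X, hG]
  · rw [← coeff_hadamard, hadamard_inv_one_sub_C_mul_X, map_mul, hG, rescale_X]
end
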